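/- Let ρ > 0 be a real number, v ∈ ℝ³, and σ a real symmetric positive-definite 3×3 matrix. Then det Ĝ(ρ,v,σ) = −ρ · det σ. In particular Ĝ(ρ,v,σ) is invertible and has negative determinant. -/

import Mathlib

/-!
Subtracting `vᵃ` times row `0` from row `a` clears the first column below `ρ` and turns the
lower-right block `ρ vᵃ vᵇ − σᵃᵇ` into `−σᵃᵇ`. Hence `det Ĝ = ρ · det (−σ) = −ρ · det σ`, which is
negative because a positive-definite `σ` has positive determinant.
-/

open Matrix

/-- The ether matrix `Ĝ(ρ, v, σ)`: a symmetric 4×4 matrix with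
`Ĝ⁰⁰ = ρ`, `Ĝ⁰ᵃ = Ĝᵃ⁰ = ρ vᵃ`, `Ĝᵃᵇ = ρ vᵃ vᵇ − σᵃᵇ`. -/
noncomputable def etherG (ρ : ℝ) (v : Fin 3 → ℝ) (σ : Matrix (Fin 3) (Fin 3) ℝ) :
    Matrix (Fin 4) (Fin 4) ℝ :=
  Matrix.of fun i j =>
    Fin.cases
      (Fin.cases ρ (fun b => ρ * v b) j)
      (fun a => Fin.cases (ρ * v a) (fun b => ρ * v a * v b - σ a b) j) i

namespace Matrix

variable {α : Type*} {n : ℕ}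

def bordered (a : α) (r c : Fin n → α) (M : Matrix (Fin n) (Fin n) α) :
    Matrix (Fin (n + 1)) (Fin (n + 1)) α :=
  of fun i j => Fin.cases (Fin.cases a r j) (fun i => Fin.cases (c i) (M i) j) i

theorem bordered_submatrix_succ (a : α) (r c : Fin n → α) (M : Matrix (Fin n) (Fin n) α) :
    (bordered a r c M).submatrix Fin.succ Fin.succ = M :=
  rfl

variable {R : Type*} [CommRing R]

theorem det_bordered_zero (a : R) (r : Fin n → R) (M : Matrix (Fin n) (Fin n) R) :
    (bordered a r 0 M).det = a * M.det := by
  rw [det_succ_column_zero, Fin.sum_univ_succ, Fin.succAbove_zero, bordered_submatrix_succ]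
  simp [bordered]

theorem det_bordered_add_mul_row_zero (a : R) (r c : Fin n → R) (M : Matrix (Fin n) (Fin n) R) :
    (bordered a r (a • c) (M + vecMulVec c r)).det = (bordered a r 0 M).det :=
  det_eq_of_forall_row_eq_smul_add_const (Fin.cases 0 c) 0 rfl fun i j => by
    refine Fin.cases ?_ (fun i => ?_) i <;> refine Fin.cases ?_ (fun j => ?_) j <;>
      simp [bordered, vecMulVec_apply, mul_comm]

end Matrix

theorem etherG_eq_bordered (ρ : ℝ) (v : Fin 3 → ℝ) (σ : Matrix (Fin 3) (Fin 3) ℝ) :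
    etherG ρ v σ =
      bordered ρ (ρ • v) (ρ • v) (-σ + vecMulVec v (ρ • v)) := by
  ext i j
  refine Fin.cases ?_ (fun a => ?_) i <;> refine Fin.cases ?_ (fun b => ?_) j <;>
    simp [etherG, bordered, vecMulVec_apply, sub_eq_neg_add, mul_assoc]

theorem det_etherG (ρ : ℝ) (v : Fin 3 → ℝ) (σ : Matrix (Fin 3) (Fin 3) ℝ) :
    (etherG ρ v σ).det = -(ρ * σ.det) := by
  rw [etherG_eq_bordered, det_bordered_add_mul_row_zero, det_bordered_zero, det_neg,
    Fintype.card_fin]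
  ring

/-- for `ρ > 0`, `v ∈ ℝ³` and `σ` symmetric positive definite,
`det Ĝ(ρ,v,σ) = −ρ · det σ`; in particular `Ĝ(ρ,v,σ)` is invertible and has
negative determinant. -/
theorem etherG_det (ρ : ℝ) (hρ : 0 < ρ) (v : Fin 3 → ℝ)
    (σ : Matrix (Fin 3) (Fin 3) ℝ) (hσ : σ.PosDef) :
    (etherG ρ v σ).det = -(ρ * σ.det) ∧
    IsUnit (etherG ρ v σ).det ∧
    (etherG ρ v σ).det < 0 := by
  have hneg : (etherG ρ v σ).det < 0 := by
    rw [det_etherG, neg_neg_iff_pos]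
    exact mul_pos hρ hσ.det_pos
  exact ⟨det_etherG ρ v σ, hneg.ne.isUnit, hneg⟩
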